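/- Let Γ_* be the graph on vertices {1,…,d} with an edge between j and k if and only if ρ_*^{(jk)} ≠ 0, where ρ_* is any symmetric measure of marginal association dominating maximal correlation, in the sense that ρ_*^{(jk)} = 0 implies ρ_m^{(jk)} = 0 for all j ≠ k. If j belongs to a connected component of Γ_* with vertex set C and k ∉ C, then every minimizer f = (f_jl)_{l≠j} of the additive least-squares criterion R_j satisfies Σ_{l∉C} f_jl(x_l) = 0 almost surely, and there exists a minimizer whose component for variable k is identically zero. -/

import Mathlib

open MeasureTheory
open scoped ProbabilityTheory Classical

/-- The correlation between two real random variables u and v. -/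
noncomputable def corrRV {Ω : Type*} [MeasureSpace Ω] (u v : Ω → ℝ) : ℝ :=
  (∫ ω, (u ω - ∫ ω', u ω') * (v ω - ∫ ω', v ω')) /
    (Real.sqrt (∫ ω, (u ω - ∫ ω', u ω') ^ 2) *
      Real.sqrt (∫ ω, (v ω - ∫ ω', v ω') ^ 2))

/-- The maximal correlation ρ_m between x_k and x_j: the supremum of
Corr(f(x_k), g(x_j)) over measurable f, g : ℝ → ℝ such that f(x_k) and g(x_j)
are square-integrable with nonzero variance. -/
noncomputable def maxCorr {Ω : Type*} [MeasureSpace Ω] (xk xj : Ω → ℝ) : ℝ :=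
  sSup {c : ℝ | ∃ f g : ℝ → ℝ, Measurable f ∧ Measurable g ∧
    MemLp (fun ω => f (xk ω)) 2 ℙ ∧ MemLp (fun ω => g (xj ω)) 2 ℙ ∧
    (∫ ω, (f (xk ω) - ∫ ω', f (xk ω')) ^ 2) ≠ 0 ∧
    (∫ ω, (g (xj ω) - ∫ ω', g (xj ω')) ^ 2) ≠ 0 ∧
    c = corrRV (fun ω => f (xk ω)) (fun ω => g (xj ω))}

/-- A tuple f = (f_l)_{l≠j} is admissible for node j if each f_l is measurable
with f_l(x_l) square-integrable and mean zero. -/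
def Admissible {Ω : Type*} [MeasureSpace Ω] {d : ℕ}
    (x : Fin d → Ω → ℝ) (j : Fin d) (f : Fin d → ℝ → ℝ) : Prop :=
  ∀ l, l ≠ j → Measurable (f l) ∧ MemLp (fun ω => f l (x l ω)) 2 ℙ ∧
    (∫ ω, f l (x l ω)) = 0

/-- The additive least-squares criterion R_j(f) = E|x_j − Σ_{l≠j} f_l(x_l)|². -/
noncomputable def addLSRisk {Ω : Type*} [MeasureSpace Ω] {d : ℕ}
    (x : Fin d → Ω → ℝ) (j : Fin d) (f : Fin d → ℝ → ℝ) : ℝ :=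
  ∫ ω, (x j ω - ∑ l ∈ Finset.univ.erase j, f l (x l ω)) ^ 2

/-- A minimizer of R_j over admissible tuples. -/
def IsAddLSMinimizer {Ω : Type*} [MeasureSpace Ω] {d : ℕ}
    (x : Fin d → Ω → ℝ) (j : Fin d) (f : Fin d → ℝ → ℝ) : Prop :=
  Admissible x j f ∧ ∀ g, Admissible x j g → addLSRisk x j f ≤ addLSRisk x j g

/-!
Every variable in the component `C` of `j` has vanishing maximal correlation with every variable
outside `C`, so square-integrable functions of the former are uncorrelated with those of the
latter. Split an admissible fit `f` into its restriction `C.indicator f` and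
`T = ∑_{l ∉ C} f_l(x_l)`: the residual `x_j - ∑ (C.indicator f)_l(x_l)` is uncorrelated with `T`,
hence orthogonal to it since `E[T] = 0`, and Pythagoras gives
`R_j(f) = R_j(C.indicator f) + E[T²]`. Minimality of `f` forces `E[T²] = 0`, so `T = 0` a.s. and
`C.indicator f`, which vanishes at `k`, is a minimizer too.
-/

open ProbabilityTheory Finset

section Covariance

variable {Ω : Type*} {mΩ : MeasurableSpace Ω} {μ : Measure Ω} {X Y : Ω → ℝ}

lemma sq_covariance_le_variance_mul [IsFiniteMeasure μ] (hX : MemLp X 2 μ) (hY : MemLp Y 2 μ) :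
    cov[X, Y; μ] ^ 2 ≤ Var[X; μ] * Var[Y; μ] := by
  -- the quadratic `t ↦ Var[t • X + Y]` is nonnegative, so its discriminant is nonpositive
  have hquad : ∀ t : ℝ, 0 ≤ Var[X; μ] * (t * t) + 2 * cov[X, Y; μ] * t + Var[Y; μ] := by
    intro t
    have := variance_nonneg (t • X + Y) μ
    rw [variance_add (hX.const_smul t) hY, variance_smul, covariance_smul_left] at this
    linarith
  have := discrim_le_zero hquad
  rw [discrim] at this
  linarith

lemma abs_covariance_le_sqrt_variance_mul [IsFiniteMeasure μ] (hX : MemLp X 2 μ)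
    (hY : MemLp Y 2 μ) :
    |cov[X, Y; μ]| ≤ √Var[X; μ] * √Var[Y; μ] := by
  rw [← Real.sqrt_mul (variance_nonneg X μ)]
  exact Real.abs_le_sqrt (sq_covariance_le_variance_mul hX hY)

lemma integral_sub_sq_eq_add_of_covariance_eq_zero [IsProbabilityMeasure μ] {U T : Ω → ℝ}
    (hU : MemLp U 2 μ) (hT : MemLp T 2 μ) (hT0 : μ[T] = 0) (h : cov[U, T; μ] = 0) :
    ∫ ω, (U ω - T ω) ^ 2 ∂μ = ∫ ω, U ω ^ 2 ∂μ + ∫ ω, T ω ^ 2 ∂μ := by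
  have hUT : ∫ ω, U ω * T ω ∂μ = 0 := by
    simpa [covariance_eq_sub hU hT, hT0] using h
  have hsq_int : Integrable (fun ω => U ω ^ 2 + T ω ^ 2) μ :=
    hU.integrable_sq.add hT.integrable_sq
  have hUT_int : Integrable (fun ω => 2 * (U ω * T ω)) μ := (hU.integrable_mul hT).const_mul 2
  calc ∫ ω, (U ω - T ω) ^ 2 ∂μ = ∫ ω, (U ω ^ 2 + T ω ^ 2 - 2 * (U ω * T ω)) ∂μ := by
        congr 1; funext ω; ring
    _ = ∫ ω, U ω ^ 2 ∂μ + ∫ ω, T ω ^ 2 ∂μ := by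
        rw [integral_sub hsq_int hUT_int,
          integral_add hU.integrable_sq hT.integrable_sq, integral_const_mul, hUT]
        ring

end Covariance

lemma Finset.sum_erase_eq_sum_indicator_add_sum_notMem {ι α : Type*} [Fintype ι] [DecidableEq ι]
    {C : Set ι} {j : ι} (hj : j ∈ C) (f : ι → α → ℝ) (y : ι → α) :
    ∑ l ∈ univ.erase j, f l (y l) =
      ∑ l ∈ univ.erase j, C.indicator f l (y l) + ∑ l ∈ univ.filter (· ∉ C), f l (y l) := by
  rw [Finset.sum_filter, ← Finset.add_sum_erase _ _ (mem_univ j), if_neg (not_not.2 hj),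
    zero_add, ← Finset.sum_add_distrib]
  refine Finset.sum_congr rfl fun l _ => ?_
  by_cases hl : l ∈ C <;> simp [hl]

section Correlation

variable {Ω : Type*} [MeasureSpace Ω]

lemma corrRV_eq_covariance_div {u v : Ω → ℝ} (hu : AEMeasurable u) (hv : AEMeasurable v) :
    corrRV u v = cov[u, v] / (√Var[u] * √Var[v]) := by
  rw [corrRV, variance_eq_integral hu, variance_eq_integral hv]
  rfl

lemma corrRV_neg_left {u v : Ω → ℝ} (hu : AEMeasurable u) (hv : AEMeasurable v) :
    corrRV (fun ω => -u ω) v = -corrRV u v := by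
  rw [corrRV_eq_covariance_div (u := fun ω => -u ω) hu.neg hv, corrRV_eq_covariance_div hu hv,
    covariance_fun_neg_left, variance_fun_neg, neg_div]

variable [IsProbabilityMeasure (ℙ : Measure Ω)]

lemma abs_corrRV_le_one {u v : Ω → ℝ} (hu : MemLp u 2 ℙ) (hv : MemLp v 2 ℙ) :
    |corrRV u v| ≤ 1 := by
  -- no variance condition is needed: a vanishing denominator gives `corrRV u v = 0`
  rw [corrRV_eq_covariance_div hu.aemeasurable hv.aemeasurable, abs_div,
    abs_of_nonneg (mul_nonneg (Real.sqrt_nonneg _) (Real.sqrt_nonneg _))]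
  exact div_le_one_of_le₀ (abs_covariance_le_sqrt_variance_mul hu hv) (by positivity)

lemma covariance_comp_eq_zero_of_maxCorr_eq_zero {xa xb : Ω → ℝ} (hm : maxCorr xa xb = 0)
    {f g : ℝ → ℝ} (hf : Measurable f) (hg : Measurable g)
    (hfL : MemLp (fun ω => f (xa ω)) 2 ℙ) (hgL : MemLp (fun ω => g (xb ω)) 2 ℙ) :
    cov[fun ω => f (xa ω), fun ω => g (xb ω)] = 0 := by
  rw [maxCorr] at hm
  by_cases hdeg : Var[fun ω => f (xa ω)] = 0 ∨ Var[fun ω => g (xb ω)] = 0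
  · have := abs_covariance_le_sqrt_variance_mul hfL hgL
    rcases hdeg with h | h <;> simpa [h] using this
  obtain ⟨hfVar, hgVar⟩ := not_or.mp hdeg
  have hcorr_nonpos : ∀ f' : ℝ → ℝ, Measurable f' → MemLp (fun ω => f' (xa ω)) 2 ℙ →
      Var[fun ω => f' (xa ω)] ≠ 0 → corrRV (fun ω => f' (xa ω)) (fun ω => g (xb ω)) ≤ 0 :=
    fun f' hf' hf'L hf'Var => hm ▸ le_csSup ⟨1, by
      rintro c ⟨f', g', -, -, hf', hg', -, -, rfl⟩
      exact (le_abs_self _).trans (abs_corrRV_le_one hf' hg')⟩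
      ⟨f', g, hf', hg, hf'L, hgL, variance_eq_integral hf'L.aemeasurable ▸ hf'Var,
        variance_eq_integral hgL.aemeasurable ▸ hgVar, rfl⟩
  have hcorr_nonneg : 0 ≤ corrRV (fun ω => f (xa ω)) (fun ω => g (xb ω)) := by
    have := hcorr_nonpos (fun t => -f t) hf.neg hfL.neg (by rwa [variance_fun_neg])
    rw [corrRV_neg_left hfL.aemeasurable hgL.aemeasurable] at this
    linarith
  have hcorr : corrRV (fun ω => f (xa ω)) (fun ω => g (xb ω)) = 0 :=
    le_antisymm (hcorr_nonpos f hf hfL hfVar) hcorr_nonneg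
  rw [corrRV_eq_covariance_div hfL.aemeasurable hgL.aemeasurable, div_eq_zero_iff] at hcorr
  refine hcorr.resolve_right ?_
  exact mul_ne_zero (by simpa using hfVar) (by simpa using hgVar)

end Correlation

section Screening

variable {Ω : Type*} [MeasureSpace Ω] {d : ℕ}
  {x : Fin d → Ω → ℝ} {j : Fin d} {C : Set (Fin d)} {f : Fin d → ℝ → ℝ}

lemma ne_of_mem_filter_notMem {ι : Type*} [Fintype ι] {C : Set ι} {j l : ι} (hj : j ∈ C)
    (hl : l ∈ univ.filter (· ∉ C)) : l ≠ j :=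
  fun h => (mem_filter.1 hl).2 (h ▸ hj)

lemma Admissible.indicator (hf : Admissible x j f) (C : Set (Fin d)) :
    Admissible x j (C.indicator f) := by
  intro l hl
  by_cases hlC : l ∈ C
  · simpa [hlC] using hf l hl
  · simp [hlC, measurable_zero]

lemma Admissible.memLp_sum_notMem (hf : Admissible x j f) (hj : j ∈ C) :
    MemLp (fun ω => ∑ l ∈ univ.filter (· ∉ C), f l (x l ω)) 2 ℙ :=
  memLp_finsetSum _ fun l hl => (hf l (ne_of_mem_filter_notMem hj hl)).2.1

variable [IsProbabilityMeasure (ℙ : Measure Ω)]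

lemma covariance_sum_notMem_eq_zero (hf : Admissible x j f) (hj : j ∈ C)
    (hmc : ∀ a ∈ C, ∀ b ∉ C, maxCorr (x a) (x b) = 0) {a : Fin d} (ha : a ∈ C) {g : ℝ → ℝ}
    (hg : Measurable g) (hgL : MemLp (fun ω => g (x a ω)) 2 ℙ) :
    cov[fun ω => g (x a ω), fun ω => ∑ l ∈ univ.filter (· ∉ C), f l (x l ω)] = 0 := by
  rw [covariance_fun_sum_right' (fun l hl => (hf l (ne_of_mem_filter_notMem hj hl)).2.1) hgL]
  refine Finset.sum_eq_zero fun l hl => ?_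
  obtain ⟨hfl, hflL, -⟩ := hf l (ne_of_mem_filter_notMem hj hl)
  exact covariance_comp_eq_zero_of_maxCorr_eq_zero (hmc a ha l (mem_filter.1 hl).2) hg hfl hgL hflL

lemma addLSRisk_eq_addLSRisk_indicator_add (hx : MemLp (x j) 2 ℙ) (hf : Admissible x j f)
    (hj : j ∈ C) (hmc : ∀ a ∈ C, ∀ b ∉ C, maxCorr (x a) (x b) = 0) :
    addLSRisk x j f = addLSRisk x j (C.indicator f) +
      ∫ ω, (∑ l ∈ univ.filter (· ∉ C), f l (x l ω)) ^ 2 := by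
  set S : Ω → ℝ := fun ω => ∑ l ∈ univ.erase j, C.indicator f l (x l ω)
  set T : Ω → ℝ := fun ω => ∑ l ∈ univ.filter (· ∉ C), f l (x l ω)
  have hfC := hf.indicator C
  have hS : MemLp S 2 ℙ := memLp_finsetSum _ fun l hl => (hfC l (ne_of_mem_erase hl)).2.1
  have hT : MemLp T 2 ℙ := hf.memLp_sum_notMem hj
  have hT0 : ∫ ω, T ω = 0 := by
    rw [integral_finsetSum _ fun l hl =>
      (hf l (ne_of_mem_filter_notMem hj hl)).2.1.integrable one_le_two]
    exact Finset.sum_eq_zero fun l hl => (hf l (ne_of_mem_filter_notMem hj hl)).2.2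
  have hST : cov[S, T] = 0 := by
    rw [covariance_fun_sum_left' (fun l hl => (hfC l (ne_of_mem_erase hl)).2.1) hT]
    refine Finset.sum_eq_zero fun l hl => ?_
    by_cases hlC : l ∈ C
    · exact covariance_sum_notMem_eq_zero hf hj hmc hlC (hfC l (ne_of_mem_erase hl)).1
        (hfC l (ne_of_mem_erase hl)).2.1
    · simp [hlC, covariance_const_left]
  have hxT : cov[x j, T] = 0 :=
    covariance_sum_notMem_eq_zero hf hj hmc hj measurable_id hx
  have hcov : cov[fun ω => x j ω - S ω, T] = 0 := by
    rw [covariance_fun_sub_left hx hS hT, hxT, hST, sub_zero]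
  calc addLSRisk x j f = ∫ ω, ((x j ω - S ω) - T ω) ^ 2 := by
        refine integral_congr_ae (.of_forall fun ω => ?_)
        simp only [Finset.sum_erase_eq_sum_indicator_add_sum_notMem hj f (fun l => x l ω), S, T,
          sub_add_eq_sub_sub]
    _ = _ := integral_sub_sq_eq_add_of_covariance_eq_zero (hx.sub hS) hT hT0 hcov

lemma IsAddLSMinimizer.integral_sq_sum_notMem_eq_zero (hf : IsAddLSMinimizer x j f)
    (hx : MemLp (x j) 2 ℙ) (hj : j ∈ C) (hmc : ∀ a ∈ C, ∀ b ∉ C, maxCorr (x a) (x b) = 0) :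
    ∫ ω, (∑ l ∈ univ.filter (· ∉ C), f l (x l ω)) ^ 2 = 0 := by
  have hrisk := addLSRisk_eq_addLSRisk_indicator_add hx hf.1 hj hmc
  have hle := hf.2 _ (hf.1.indicator C)
  have hnonneg : 0 ≤ ∫ ω, (∑ l ∈ univ.filter (· ∉ C), f l (x l ω)) ^ 2 :=
    integral_nonneg fun ω => sq_nonneg _
  linarith

lemma IsAddLSMinimizer.ae_sum_notMem_eq_zero (hf : IsAddLSMinimizer x j f)
    (hx : MemLp (x j) 2 ℙ) (hj : j ∈ C) (hmc : ∀ a ∈ C, ∀ b ∉ C, maxCorr (x a) (x b) = 0) :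
    ∀ᵐ ω ∂(ℙ : Measure Ω), ∑ l ∈ univ.filter (· ∉ C), f l (x l ω) = 0 := by
  have := (integral_eq_zero_iff_of_nonneg (fun ω => sq_nonneg _)
    (hf.1.memLp_sum_notMem hj).integrable_sq).1
    (hf.integral_sq_sum_notMem_eq_zero hx hj hmc)
  filter_upwards [this] with ω hω
  simpa using hω

lemma IsAddLSMinimizer.indicator (hf : IsAddLSMinimizer x j f)
    (hx : MemLp (x j) 2 ℙ) (hj : j ∈ C) (hmc : ∀ a ∈ C, ∀ b ∉ C, maxCorr (x a) (x b) = 0) :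
    IsAddLSMinimizer x j (C.indicator f) := by
  refine ⟨hf.1.indicator C, fun g hg => ?_⟩
  have hrisk := addLSRisk_eq_addLSRisk_indicator_add hx hf.1 hj hmc
  rw [hf.integral_sq_sum_notMem_eq_zero hx hj hmc, add_zero] at hrisk
  exact hrisk ▸ hf.2 g hg

end Screening

theorem connected_component_screening_general_association_general
    {Ω : Type*} [MeasureSpace Ω] [IsProbabilityMeasure (ℙ : Measure Ω)]
    {d : ℕ} (x : Fin d → Ω → ℝ)
    (hx_L2 : ∀ i, MemLp (x i) 2 ℙ)
    (ρstar : Fin d → Fin d → ℝ)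
    (hdom : ∀ a b, a ≠ b → ρstar a b = 0 → maxCorr (x a) (x b) = 0)
    (j k : Fin d)
    (C : Set (Fin d))
    (hC : C = {l | (SimpleGraph.fromRel (fun a b => ρstar a b ≠ 0)).Reachable j l})
    (hk : k ∉ C) :
    (∀ f : Fin d → ℝ → ℝ, IsAddLSMinimizer x j f →
      ∀ᵐ ω ∂(ℙ : Measure Ω),
        (∑ l ∈ Finset.univ.filter (fun l => l ∉ C), f l (x l ω)) = 0)
    ∧ ((∃ f, IsAddLSMinimizer x j f) →
        ∃ f, IsAddLSMinimizer x j f ∧ f k = fun _ => 0) := by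
  have hj : j ∈ C := hC ▸ SimpleGraph.Reachable.refl j
  have hmc : ∀ a ∈ C, ∀ b ∉ C, maxCorr (x a) (x b) = 0 := by
    intro a ha b hb
    have hab : a ≠ b := fun h => hb (h ▸ ha)
    refine hdom a b hab (not_not.1 fun hρ => hb ?_)
    rw [hC] at ha ⊢
    exact ha.trans ((SimpleGraph.fromRel_adj _ _ _).2 ⟨hab, .inl hρ⟩).reachable
  refine ⟨fun f hf => hf.ae_sum_notMem_eq_zero (hx_L2 j) hj hmc, fun ⟨f, hf⟩ => ?_⟩
  exact ⟨C.indicator f, hf.indicator (hx_L2 j) hj hmc, Set.indicator_of_notMem hk f⟩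

/-- **Screening with a general measure of marginal association (Theorem 2,
extended version).** Let ρ_* be any symmetric measure of marginal association
dominating maximal correlation (ρ_*^{(jk)} = 0 ⟹ ρ_m^{(jk)} = 0) and let Γ_* be
the graph with an edge between j and k iff ρ_*^{(jk)} ≠ 0.  If j belongs to a
connected component of Γ_* with vertex set C and k ∉ C, then every minimizer f
of R_j satisfies Σ_{l∉C} f_l(x_l) = 0 a.s., and (provided a minimizer exists)
there is a minimizer whose component for variable k is identically zero. -/
theorem connected_component_screening_general_association
    {Ω : Type*} [MeasureSpace Ω] [IsProbabilityMeasure (ℙ : Measure Ω)]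
    {d : ℕ} (x : Fin d → Ω → ℝ)
    (hx_meas : ∀ i, Measurable (x i))
    (hx_L2 : ∀ i, MemLp (x i) 2 ℙ)
    (hx_mean : ∀ i, (∫ ω, x i ω) = 0)
    (ρstar : Fin d → Fin d → ℝ)
    (hsymm : ∀ a b, ρstar a b = ρstar b a)
    (hdom : ∀ a b, a ≠ b → ρstar a b = 0 → maxCorr (x a) (x b) = 0)
    (j k : Fin d)
    (C : Set (Fin d))
    (hC : C = {l | (SimpleGraph.fromRel (fun a b => ρstar a b ≠ 0)).Reachable j l})
    (hk : k ∉ C) :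
    (∀ f : Fin d → ℝ → ℝ, IsAddLSMinimizer x j f →
      ∀ᵐ ω ∂(ℙ : Measure Ω),
        (∑ l ∈ Finset.univ.filter (fun l => l ∉ C), f l (x l ω)) = 0)
    ∧ ((∃ f, IsAddLSMinimizer x j f) →
        ∃ f, IsAddLSMinimizer x j f ∧ f k = fun _ => 0) :=
  connected_component_screening_general_association_general x hx_L2 ρstar hdom j k C hC hk
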